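/- Let (C, E, s) be an n-exangulated category and F : C → A a half exact functor. Suppose fₙ : Xₙ → X_{n+1} and g_{n+1} : X_{n+1} → Y_{n+1} are both s|_{E^F_R}-deflations (deflations of distinguished n-exangles with extension in E^F_R). Then the composite g_{n+1} ∘ fₙ is an s|_{E^F_R}-deflation; that is, F(g_{n+1} fₙ) = F(g_{n+1})F(fₙ) is an epimorphism and the extension of any realization of the composite lies in E^F_R. -/

import Mathlib

open CategoryTheory CategoryTheory.Limits Opposite

universe v u v₂ u₂

/-- A candidate `n`-exangle: an `(n+2)`-term sequence of composable morphisms in `C`,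
in degrees `0, 1, …, n+1`. -/
structure NExCplx (C : Type u) [Category.{v} C] (n : ℕ) where
  X : Fin (n + 2) → C
  d : ∀ i : Fin (n + 1), X i.castSucc ⟶ X i.succ

namespace NEx

variable {C : Type u} [Category.{v} C]

/-- The degree `0` index. -/
abbrev fin0 (n : ℕ) : Fin (n + 2) := ⟨0, by omega⟩

/-- The degree `n+1` index. -/
abbrev finLast (n : ℕ) : Fin (n + 2) := Fin.last (n + 1)

/-- The group of `E`-extensions attached to a candidate `n`-exangle:
`E(X_{n+1}, X₀)`. -/
abbrev NEext (E : Cᵒᵖ ⥤ C ⥤ AddCommGrpCat.{v}) {n : ℕ} (Z : NExCplx C n) : Type v :=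
  (E.obj (op (Z.X (finLast n)))).obj (Z.X (fin0 n))

/-- Pushforward `a_*δ` of an extension `δ ∈ E(X, A)` along `a : A ⟶ A'`. -/
def pushf (E : Cᵒᵖ ⥤ C ⥤ AddCommGrpCat.{v}) {A A' X : C} (a : A ⟶ A')
    (δ : (E.obj (op X)).obj A) : (E.obj (op X)).obj A' :=
  ((E.obj (op X)).map a) δ

/-- Pullback `c^*δ` of an extension `δ ∈ E(X, A)` along `c : X' ⟶ X`. -/
def pullb (E : Cᵒᵖ ⥤ C ⥤ AddCommGrpCat.{v}) {A X X' : C} (c : X' ⟶ X)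
    (δ : (E.obj (op X)).obj A) : (E.obj (op X')).obj A :=
  ((E.map c.op).app A) δ

/-- Transport of an extension along equalities of its end objects. -/
def extCast (E : Cᵒᵖ ⥤ C ⥤ AddCommGrpCat.{v}) {A A' X X' : C} (hA : A = A') (hX : X = X')
    (δ : (E.obj (op X)).obj A) : (E.obj (op X')).obj A' :=
  pullb E (eqToHom hX.symm) (pushf E (eqToHom hA) δ)

/-- A morphism of (candidate) `n`-exangles `⟨Z, δ⟩ → ⟨W, ρ⟩`. -/
structure ExangleMor (E : Cᵒᵖ ⥤ C ⥤ AddCommGrpCat.{v}) {n : ℕ} (Z W : NExCplx C n)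
    (δ : NEext E Z) (ρ : NEext E W) where
  app : ∀ i : Fin (n + 2), Z.X i ⟶ W.X i
  comm : ∀ i : Fin (n + 1), Z.d i ≫ app i.succ = app i.castSucc ≫ W.d i
  compat : pushf E (app (fin0 n)) δ = pullb E (app (finLast n)) ρ


variable [Preadditive C] [HasBinaryBiproducts C]

/-- Objects of the total complex (mapping cone) of a ladder with rows `A`, `B`. -/
noncomputable def coneX (n : ℕ) (A B : Fin (n + 1) → C) (i : Fin (n + 2)) : C :=
  if _ : i.val = 0 then A ⟨0, Nat.succ_pos n⟩
  else if _ : i.val ≤ n then A ⟨i.val, by omega⟩ ⊞ B ⟨i.val - 1, by omega⟩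
  else B ⟨n, Nat.lt_succ_self n⟩

lemma coneX_zero (n : ℕ) (A B : Fin (n + 1) → C) :
    coneX n A B (fin0 n) = A ⟨0, Nat.succ_pos n⟩ := by
  simp [coneX, fin0]

lemma coneX_mid (n : ℕ) (A B : Fin (n + 1) → C) (i : Fin (n + 2))
    (h0 : i.val ≠ 0) (h1 : i.val ≤ n) :
    coneX n A B i = (A ⟨i.val, by omega⟩ ⊞ B ⟨i.val - 1, by omega⟩) := by
  rw [coneX, dif_neg h0, dif_pos h1]

lemma coneX_last (n : ℕ) (A B : Fin (n + 1) → C) :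
    coneX n A B (finLast n) = B ⟨n, Nat.lt_succ_self n⟩ := by
  rw [coneX, dif_neg (by simp [finLast]), dif_neg (by simp [finLast])]

/-- Differentials of the mapping cone of a ladder:
`d₀ = (-f₀, φ₀)ᵀ`, `dᵢ = [-fᵢ, 0; φᵢ, g_{i-1}]`, `dₙ = (φₙ, g_{n-1})`. -/
noncomputable def coneD (n : ℕ) (A B : Fin (n + 1) → C)
    (f : ∀ i : Fin n, A i.castSucc ⟶ A i.succ)
    (g : ∀ i : Fin n, B i.castSucc ⟶ B i.succ)
    (φ : ∀ i : Fin (n + 1), A i ⟶ B i)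
    (i : Fin (n + 1)) : coneX n A B i.castSucc ⟶ coneX n A B i.succ :=
  if h0 : i.val = 0 then
    if hn : n = 0 then
      eqToHom (show coneX n A B i.castSucc = A ⟨0, Nat.succ_pos n⟩ by
          simp [coneX, h0]) ≫
        φ ⟨0, Nat.succ_pos n⟩ ≫
        eqToHom (show B ⟨0, Nat.succ_pos n⟩ = coneX n A B i.succ by
          subst hn
          rw [coneX, dif_neg (by simp only [Fin.val_succ]; omega),
            dif_neg (by simp only [Fin.val_succ]; omega)])
    else
      eqToHom (show coneX n A B i.castSucc = A ⟨i.val, i.isLt⟩ by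
          rw [coneX, dif_pos (show (i.castSucc).val = 0 from h0)]
          exact congrArg A (Fin.ext h0.symm)) ≫
        biprod.lift (-(f ⟨i.val, by omega⟩)) (φ ⟨i.val, i.isLt⟩) ≫
        eqToHom (show (A ⟨i.val + 1, by omega⟩ ⊞ B ⟨i.val + 1 - 1, by omega⟩ : C)
            = coneX n A B i.succ by
          rw [coneX, dif_neg (by simp only [Fin.val_succ]; omega),
            dif_pos (by simp only [Fin.val_succ]; omega)]
          rfl)
  else if hv : i.val < n then
    eqToHom (show coneX n A B i.castSucc
          = (A ⟨i.val, i.isLt⟩ ⊞ B ⟨i.val - 1, by omega⟩) by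
        rw [coneX, dif_neg (show ¬(i.castSucc).val = 0 from h0),
          dif_pos (show (i.castSucc).val ≤ n by simp only [Fin.coe_castSucc]; omega)]
        rfl) ≫
      biprod.lift (biprod.desc (-(f ⟨i.val, hv⟩)) 0)
        (biprod.desc (φ ⟨i.val, i.isLt⟩)
          (g ⟨i.val - 1, by omega⟩ ≫
            eqToHom (congrArg B (Fin.ext (show i.val - 1 + 1 = i.val by omega))))) ≫
      eqToHom (show (A ⟨i.val + 1, by omega⟩ ⊞ B ⟨i.val + 1 - 1, by omega⟩ : C)
          = coneX n A B i.succ by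
        rw [coneX, dif_neg (by simp only [Fin.val_succ]; omega),
          dif_pos (by simp only [Fin.val_succ]; omega)]
        rfl)
  else
    eqToHom (show coneX n A B i.castSucc
          = (A ⟨i.val, i.isLt⟩ ⊞ B ⟨i.val - 1, by have := i.isLt; omega⟩) by
        rw [coneX, dif_neg (show ¬(i.castSucc).val = 0 from h0),
          dif_pos (show (i.castSucc).val ≤ n by
            simp only [Fin.coe_castSucc]; have := i.isLt; omega)]
        rfl) ≫
      biprod.desc (φ ⟨i.val, i.isLt⟩)
        (g ⟨i.val - 1, by have := i.isLt; omega⟩ ≫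
          eqToHom (congrArg B (Fin.ext (show i.val - 1 + 1 = i.val by omega)))) ≫
      eqToHom (show B ⟨i.val, i.isLt⟩ = coneX n A B i.succ by
        rw [coneX, dif_neg (by simp only [Fin.val_succ]; omega),
          dif_neg (by simp only [Fin.val_succ]; have := i.isLt; omega)]
        exact congrArg B (Fin.ext (show (i.val : ℕ) = n by have := i.isLt; omega)))

/-- The mapping cone (total complex) of a ladder, as a candidate `n`-exangle. -/
noncomputable def coneCplx (n : ℕ) (A B : Fin (n + 1) → C)
    (f : ∀ i : Fin n, A i.castSucc ⟶ A i.succ)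
    (g : ∀ i : Fin n, B i.castSucc ⟶ B i.succ)
    (φ : ∀ i : Fin (n + 1), A i ⟶ B i) : NExCplx C n :=
  ⟨coneX n A B, coneD n A B f g φ⟩


/-- Objects of the total complex (mapping cocone) of a ladder with rows `A`, `B`. -/
noncomputable def coconeX (n : ℕ) (A B : Fin (n + 1) → C) (i : Fin (n + 2)) : C :=
  if _ : i.val = 0 then A ⟨0, Nat.succ_pos n⟩
  else if _ : i.val ≤ n then B ⟨i.val - 1, by omega⟩ ⊞ A ⟨i.val, by omega⟩
  else B ⟨n, Nat.lt_succ_self n⟩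

/-- Differentials of the mapping cocone of a ladder:
`d₀ = (φ₀, -f₀)ᵀ`, `dᵢ = [g_{i-1}, φᵢ; 0, -fᵢ]`, `dₙ = (g_{n-1}, φₙ)`. -/
noncomputable def coconeD (n : ℕ) (A B : Fin (n + 1) → C)
    (f : ∀ i : Fin n, A i.castSucc ⟶ A i.succ)
    (g : ∀ i : Fin n, B i.castSucc ⟶ B i.succ)
    (φ : ∀ i : Fin (n + 1), A i ⟶ B i)
    (i : Fin (n + 1)) : coconeX n A B i.castSucc ⟶ coconeX n A B i.succ :=
  if h0 : i.val = 0 then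
    if hn : n = 0 then
      eqToHom (show coconeX n A B i.castSucc = A ⟨0, Nat.succ_pos n⟩ by
          simp [coconeX, h0]) ≫
        φ ⟨0, Nat.succ_pos n⟩ ≫
        eqToHom (show B ⟨0, Nat.succ_pos n⟩ = coconeX n A B i.succ by
          subst hn
          rw [coconeX, dif_neg (by simp only [Fin.val_succ]; omega),
            dif_neg (by simp only [Fin.val_succ]; omega)])
    else
      eqToHom (show coconeX n A B i.castSucc = A ⟨i.val, i.isLt⟩ by
          rw [coconeX, dif_pos (show (i.castSucc).val = 0 from h0)]
          exact congrArg A (Fin.ext h0.symm)) ≫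
        biprod.lift (φ ⟨i.val, i.isLt⟩) (-(f ⟨i.val, by omega⟩)) ≫
        eqToHom (show (B ⟨i.val + 1 - 1, by omega⟩ ⊞ A ⟨i.val + 1, by omega⟩ : C)
            = coconeX n A B i.succ by
          rw [coconeX, dif_neg (by simp only [Fin.val_succ]; omega),
            dif_pos (by simp only [Fin.val_succ]; omega)]
          rfl)
  else if hv : i.val < n then
    eqToHom (show coconeX n A B i.castSucc
          = (B ⟨i.val - 1, by omega⟩ ⊞ A ⟨i.val, i.isLt⟩) by
        rw [coconeX, dif_neg (show ¬(i.castSucc).val = 0 from h0),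
          dif_pos (show (i.castSucc).val ≤ n by simp only [Fin.coe_castSucc]; omega)]
        rfl) ≫
      biprod.lift
        (biprod.desc (g ⟨i.val - 1, by omega⟩ ≫
            eqToHom (congrArg B (Fin.ext (show i.val - 1 + 1 = i.val by omega))))
          (φ ⟨i.val, i.isLt⟩))
        (biprod.desc 0 (-(f ⟨i.val, hv⟩))) ≫
      eqToHom (show (B ⟨i.val + 1 - 1, by omega⟩ ⊞ A ⟨i.val + 1, by omega⟩ : C)
          = coconeX n A B i.succ by
        rw [coconeX, dif_neg (by simp only [Fin.val_succ]; omega),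
          dif_pos (by simp only [Fin.val_succ]; omega)]
        rfl)
  else
    eqToHom (show coconeX n A B i.castSucc
          = (B ⟨i.val - 1, by have := i.isLt; omega⟩ ⊞ A ⟨i.val, i.isLt⟩) by
        rw [coconeX, dif_neg (show ¬(i.castSucc).val = 0 from h0),
          dif_pos (show (i.castSucc).val ≤ n by
            simp only [Fin.coe_castSucc]; have := i.isLt; omega)]
        rfl) ≫
      biprod.desc
        (g ⟨i.val - 1, by have := i.isLt; omega⟩ ≫
          eqToHom (congrArg B (Fin.ext (show i.val - 1 + 1 = i.val by omega))))
        (φ ⟨i.val, i.isLt⟩) ≫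
      eqToHom (show B ⟨i.val, i.isLt⟩ = coconeX n A B i.succ by
        rw [coconeX, dif_neg (by simp only [Fin.val_succ]; omega),
          dif_neg (by simp only [Fin.val_succ]; have := i.isLt; omega)]
        exact congrArg B (Fin.ext (show (i.val : ℕ) = n by have := i.isLt; omega)))

noncomputable def coconeCplx (n : ℕ) (A B : Fin (n + 1) → C)
    (f : ∀ i : Fin n, A i.castSucc ⟶ A i.succ)
    (g : ∀ i : Fin n, B i.castSucc ⟶ B i.succ)
    (φ : ∀ i : Fin (n + 1), A i ⟶ B i) : NExCplx C n :=
  ⟨coconeX n A B, coconeD n A B f g φ⟩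


/-- Differentials of the total complex in the second sign convention:
`d₀ = (-f₀, φ₀)ᵀ`, `dᵢ = [fᵢ, 0; (-1)^{i+1}φᵢ, g_{i-1}]`,
`dₙ = ((-1)^{n+1}φₙ, g_{n-1})`. -/
noncomputable def coneD' (n : ℕ) (A B : Fin (n + 1) → C)
    (f : ∀ i : Fin n, A i.castSucc ⟶ A i.succ)
    (g : ∀ i : Fin n, B i.castSucc ⟶ B i.succ)
    (φ : ∀ i : Fin (n + 1), A i ⟶ B i)
    (i : Fin (n + 1)) : coneX n A B i.castSucc ⟶ coneX n A B i.succ :=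
  if h0 : i.val = 0 then
    if hn : n = 0 then
      eqToHom (show coneX n A B i.castSucc = A ⟨0, Nat.succ_pos n⟩ by
          simp [coneX, h0]) ≫
        φ ⟨0, Nat.succ_pos n⟩ ≫
        eqToHom (show B ⟨0, Nat.succ_pos n⟩ = coneX n A B i.succ by
          subst hn
          rw [coneX, dif_neg (by simp only [Fin.val_succ]; omega),
            dif_neg (by simp only [Fin.val_succ]; omega)])
    else
      eqToHom (show coneX n A B i.castSucc = A ⟨i.val, i.isLt⟩ by
          rw [coneX, dif_pos (show (i.castSucc).val = 0 from h0)]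
          exact congrArg A (Fin.ext h0.symm)) ≫
        biprod.lift (-(f ⟨i.val, by omega⟩)) (φ ⟨i.val, i.isLt⟩) ≫
        eqToHom (show (A ⟨i.val + 1, by omega⟩ ⊞ B ⟨i.val + 1 - 1, by omega⟩ : C)
            = coneX n A B i.succ by
          rw [coneX, dif_neg (by simp only [Fin.val_succ]; omega),
            dif_pos (by simp only [Fin.val_succ]; omega)]
          rfl)
  else if hv : i.val < n then
    eqToHom (show coneX n A B i.castSucc
          = (A ⟨i.val, i.isLt⟩ ⊞ B ⟨i.val - 1, by omega⟩) by
        rw [coneX, dif_neg (show ¬(i.castSucc).val = 0 from h0),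
          dif_pos (show (i.castSucc).val ≤ n by simp only [Fin.coe_castSucc]; omega)]
        rfl) ≫
      biprod.lift (biprod.desc (f ⟨i.val, hv⟩) 0)
        (biprod.desc (((-1 : ℤ) ^ (i.val + 1)) • φ ⟨i.val, i.isLt⟩)
          (g ⟨i.val - 1, by omega⟩ ≫
            eqToHom (congrArg B (Fin.ext (show i.val - 1 + 1 = i.val by omega))))) ≫
      eqToHom (show (A ⟨i.val + 1, by omega⟩ ⊞ B ⟨i.val + 1 - 1, by omega⟩ : C)
          = coneX n A B i.succ by
        rw [coneX, dif_neg (by simp only [Fin.val_succ]; omega),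
          dif_pos (by simp only [Fin.val_succ]; omega)]
        rfl)
  else
    eqToHom (show coneX n A B i.castSucc
          = (A ⟨i.val, i.isLt⟩ ⊞ B ⟨i.val - 1, by have := i.isLt; omega⟩) by
        rw [coneX, dif_neg (show ¬(i.castSucc).val = 0 from h0),
          dif_pos (show (i.castSucc).val ≤ n by
            simp only [Fin.coe_castSucc]; have := i.isLt; omega)]
        rfl) ≫
      biprod.desc (((-1 : ℤ) ^ (i.val + 1)) • φ ⟨i.val, i.isLt⟩)
        (g ⟨i.val - 1, by have := i.isLt; omega⟩ ≫
          eqToHom (congrArg B (Fin.ext (show i.val - 1 + 1 = i.val by omega)))) ≫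
      eqToHom (show B ⟨i.val, i.isLt⟩ = coneX n A B i.succ by
        rw [coneX, dif_neg (by simp only [Fin.val_succ]; omega),
          dif_neg (by simp only [Fin.val_succ]; have := i.isLt; omega)]
        exact congrArg B (Fin.ext (show (i.val : ℕ) = n by have := i.isLt; omega)))



lemma coconeX_zero (n : ℕ) (A B : Fin (n + 1) → C) :
    coconeX n A B (fin0 n) = A ⟨0, Nat.succ_pos n⟩ := by
  simp [coconeX, fin0]

lemma coconeX_last (n : ℕ) (A B : Fin (n + 1) → C) :
    coconeX n A B (finLast n) = B ⟨n, Nat.lt_succ_self n⟩ := by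
  rw [coconeX, dif_neg (by simp [finLast]), dif_neg (by simp [finLast])]

variable [HasZeroObject C]

/-- A ladder (with rows `A`, `B`, horizontal maps `f`, `g` and vertical maps `φ`)
is a homotopy cartesian diagram with differential `dl` if its total complex
(mapping cone) together with `dl` is a distinguished `n`-exangle. -/
noncomputable def IsHomotopyCartesian (n : ℕ) (E : Cᵒᵖ ⥤ C ⥤ AddCommGrpCat.{v})
    (dist : ∀ Z : NExCplx C n, NEext E Z → Prop)
    (A B : Fin (n + 1) → C)
    (f : ∀ i : Fin n, A i.castSucc ⟶ A i.succ)
    (g : ∀ i : Fin n, B i.castSucc ⟶ B i.succ)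
    (φ : ∀ i : Fin (n + 1), A i ⟶ B i)
    (dl : (E.obj (op (B ⟨n, Nat.lt_succ_self n⟩))).obj (A ⟨0, Nat.succ_pos n⟩)) : Prop :=
  dist (coneCplx n A B f g φ)
    (extCast E (coneX_zero n A B).symm (coneX_last n A B).symm dl)

/-- The dual notion, using the mapping cocone. -/
noncomputable def IsCoHomotopyCartesian (n : ℕ) (E : Cᵒᵖ ⥤ C ⥤ AddCommGrpCat.{v})
    (dist : ∀ Z : NExCplx C n, NEext E Z → Prop)
    (A B : Fin (n + 1) → C)
    (f : ∀ i : Fin n, A i.castSucc ⟶ A i.succ)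
    (g : ∀ i : Fin n, B i.castSucc ⟶ B i.succ)
    (φ : ∀ i : Fin (n + 1), A i ⟶ B i)
    (dl : (E.obj (op (B ⟨n, Nat.lt_succ_self n⟩))).obj (A ⟨0, Nat.succ_pos n⟩)) : Prop :=
  dist (coconeCplx n A B f g φ)
    (extCast E (coconeX_zero n A B).symm (coconeX_last n A B).symm dl)

/-- `fm` is an inflation: it occurs as the `0`-th differential of some distinguished
`n`-exangle. -/
def IsInflationFor (n : ℕ) (E : Cᵒᵖ ⥤ C ⥤ AddCommGrpCat.{v})
    (dist : ∀ Z : NExCplx C n, NEext E Z → Prop) {X Y : C} (fm : X ⟶ Y) : Prop :=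
  ∃ (Z : NExCplx C n) (δ : NEext E Z), dist Z δ ∧
    ∃ (h1 : Z.X (fin0 n) = X) (h2 : Z.X (Fin.succ ⟨0, Nat.succ_pos n⟩) = Y),
      Z.d ⟨0, Nat.succ_pos n⟩ = eqToHom h1 ≫ fm ≫ eqToHom h2.symm

/-- `gm` is a deflation: it occurs as the `n`-th differential of some distinguished
`n`-exangle. -/
def IsDeflationFor (n : ℕ) (E : Cᵒᵖ ⥤ C ⥤ AddCommGrpCat.{v})
    (dist : ∀ Z : NExCplx C n, NEext E Z → Prop) {X Y : C} (gm : X ⟶ Y) : Prop :=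
  ∃ (Z : NExCplx C n) (δ : NEext E Z), dist Z δ ∧
    ∃ (h1 : Z.X (Fin.castSucc (Fin.last n)) = X) (h2 : Z.X (finLast n) = Y),
      Z.d (Fin.last n) = eqToHom h1 ≫ gm ≫ eqToHom h2.symm

/-- A pre-`n`-exangulated category structure on the additive category `C`:
an additive bifunctor `E : Cᵒᵖ × C → Ab` together with an exact realization,
recorded by the predicate `Distinguished` singling out the distinguished
`n`-exangles, subject to exactness of the associated Hom-sequences (R1),
existence of realizations, lifting of morphisms of extensions (R0), and
closure of inflations and deflations under composition (EA1). -/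
structure PreNExangulated (C : Type u) [Category.{v} C] [Preadditive C]
    [HasZeroObject C] [HasBinaryBiproducts C] (n : ℕ) where
  E : Cᵒᵖ ⥤ C ⥤ AddCommGrpCat.{v}
  Distinguished : ∀ Z : NExCplx C n, NEext E Z → Prop
  exact_contra_mid : ∀ ⦃Z : NExCplx C n⦄ ⦃δ : NEext E Z⦄, Distinguished Z δ →
    ∀ (W : C) (i : Fin n),
      Function.Exact (fun h : W ⟶ Z.X i.castSucc.castSucc => h ≫ Z.d i.castSucc)
        (fun h : W ⟶ Z.X i.succ.castSucc => h ≫ Z.d i.succ)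
  exact_contra_last : ∀ ⦃Z : NExCplx C n⦄ ⦃δ : NEext E Z⦄, Distinguished Z δ →
    ∀ (W : C),
      Function.Exact (fun h : W ⟶ Z.X (Fin.castSucc (Fin.last n)) => h ≫ Z.d (Fin.last n))
        (fun h : W ⟶ Z.X (finLast n) => pullb E h δ)
  exact_cov_mid : ∀ ⦃Z : NExCplx C n⦄ ⦃δ : NEext E Z⦄, Distinguished Z δ →
    ∀ (W : C) (i : Fin n),
      Function.Exact (fun h : Z.X i.succ.succ ⟶ W => Z.d i.succ ≫ h)
        (fun h : Z.X i.castSucc.succ ⟶ W => Z.d i.castSucc ≫ h)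
  exact_cov_first : ∀ ⦃Z : NExCplx C n⦄ ⦃δ : NEext E Z⦄, Distinguished Z δ →
    ∀ (W : C),
      Function.Exact (fun h : Z.X (Fin.succ ⟨0, Nat.succ_pos n⟩) ⟶ W => Z.d ⟨0, Nat.succ_pos n⟩ ≫ h)
        (fun h : Z.X (fin0 n) ⟶ W => pushf E h δ)
  lift_exists : ∀ ⦃Z W : NExCplx C n⦄ ⦃δ : NEext E Z⦄ ⦃ρ : NEext E W⦄,
    Distinguished Z δ → Distinguished W ρ →
    ∀ (a : Z.X (fin0 n) ⟶ W.X (fin0 n)) (c : Z.X (finLast n) ⟶ W.X (finLast n)),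
      pushf E a δ = pullb E c ρ →
      ∃ φ : ExangleMor E Z W δ ρ, φ.app (fin0 n) = a ∧ φ.app (finLast n) = c
  realize : ∀ (A Xl : C) (δ : (E.obj (op Xl)).obj A),
    ∃ (Z : NExCplx C n) (h0 : Z.X (fin0 n) = A) (hl : Z.X (finLast n) = Xl),
      Distinguished Z (extCast E h0.symm hl.symm δ)
  infl_comp : ∀ {X Y W : C} (f : X ⟶ Y) (g : Y ⟶ W),
    IsInflationFor n E Distinguished f → IsInflationFor n E Distinguished g →
      IsInflationFor n E Distinguished (f ≫ g)
  defl_comp : ∀ {X Y W : C} (f : X ⟶ Y) (g : Y ⟶ W),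
    IsDeflationFor n E Distinguished f → IsDeflationFor n E Distinguished g →
      IsDeflationFor n E Distinguished (f ≫ g)

/-- The axiom (EA2): a morphism of extensions of the form `(id, c)` between
distinguished `n`-exangles admits a good lift, i.e. one whose mapping cone
together with `(d₀^X)_*ρ` is again a distinguished `n`-exangle. -/
noncomputable def EA2For (n : ℕ) (E : Cᵒᵖ ⥤ C ⥤ AddCommGrpCat.{v})
    (dist : ∀ Z : NExCplx C n, NEext E Z → Prop) : Prop :=
  ∀ (Z W : NExCplx C n) (δ : NEext E Z) (ρ : NEext E W),
    dist Z δ → dist W ρ →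
    ∀ (h0 : Z.X (fin0 n) = W.X (fin0 n)) (c : Z.X (finLast n) ⟶ W.X (finLast n)),
      pushf E (eqToHom h0) δ = pullb E c ρ →
      ∃ φ : ExangleMor E Z W δ ρ,
        φ.app (fin0 n) = eqToHom h0 ∧ φ.app (finLast n) = c ∧
        IsHomotopyCartesian n E dist (fun i => Z.X i.succ) (fun i => W.X i.succ)
          (fun i => Z.d i.succ) (fun i => W.d i.succ) (fun i => φ.app i.succ)
          (pushf E (eqToHom h0.symm ≫ Z.d ⟨0, Nat.succ_pos n⟩) ρ)

/-- The condition (EA2-1): given two distinguished `n`-exangles starting at the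
same object and a morphism `φ₁` compatible with the first differentials, it
extends to a morphism of `n`-exangles `(id, φ₁, φ₂, …, φ_{n+1})` whose induced
ladder (in degrees `1, …, n+1`) is homotopy cartesian with differential
`(f₀)_*δ'`. -/
noncomputable def EA21For (n : ℕ) (E : Cᵒᵖ ⥤ C ⥤ AddCommGrpCat.{v})
    (dist : ∀ Z : NExCplx C n, NEext E Z → Prop) : Prop :=
  ∀ (Z W : NExCplx C n) (δ : NEext E Z) (δ' : NEext E W),
    dist Z δ → dist W δ' →
    ∀ (h0 : Z.X (fin0 n) = W.X (fin0 n))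
      (φ1 : Z.X (Fin.succ ⟨0, Nat.succ_pos n⟩) ⟶ W.X (Fin.succ ⟨0, Nat.succ_pos n⟩)),
      Z.d ⟨0, Nat.succ_pos n⟩ ≫ φ1 = eqToHom h0 ≫ W.d ⟨0, Nat.succ_pos n⟩ →
      ∃ φ : ExangleMor E Z W δ δ',
        φ.app (fin0 n) = eqToHom h0 ∧ φ.app (Fin.succ ⟨0, Nat.succ_pos n⟩) = φ1 ∧
        IsHomotopyCartesian n E dist (fun i => Z.X i.succ) (fun i => W.X i.succ)
          (fun i => Z.d i.succ) (fun i => W.d i.succ) (fun i => φ.app i.succ)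
          (pushf E (eqToHom h0.symm ≫ Z.d ⟨0, Nat.succ_pos n⟩) δ')

/-- The axiom (EA2)ᵒᵖ, dual to (EA2), via mapping cocones. -/
noncomputable def EA2opFor (n : ℕ) (E : Cᵒᵖ ⥤ C ⥤ AddCommGrpCat.{v})
    (dist : ∀ Z : NExCplx C n, NEext E Z → Prop) : Prop :=
  ∀ (W Z : NExCplx C n) (ρ : NEext E W) (δ : NEext E Z),
    dist W ρ → dist Z δ →
    ∀ (hl : W.X (finLast n) = Z.X (finLast n)) (a : W.X (fin0 n) ⟶ Z.X (fin0 n)),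
      pushf E a ρ = pullb E (eqToHom hl) δ →
      ∃ φ : ExangleMor E W Z ρ δ,
        φ.app (fin0 n) = a ∧ φ.app (finLast n) = eqToHom hl ∧
        IsCoHomotopyCartesian n E dist (fun i => W.X i.castSucc) (fun i => Z.X i.castSucc)
          (fun i => W.d i.castSucc) (fun i => Z.d i.castSucc) (fun i => φ.app i.castSucc)
          (pullb E (Z.d (Fin.last n) ≫ eqToHom hl.symm) ρ)

/-- An `n`-exangulated category: a pre-`n`-exangulated category satisfying
(EA2) and (EA2)ᵒᵖ. -/
structure NExangulated (C : Type u) [Category.{v} C] [Preadditive C]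
    [HasZeroObject C] [HasBinaryBiproducts C] (n : ℕ)
    extends PreNExangulated C n where
  ea2 : EA2For n E Distinguished
  ea2op : EA2opFor n E Distinguished

section HalfExact

variable {A : Type u₂} [Category.{v₂} A] [Abelian A]

/-- A functor `F : C → 𝒜` to an abelian category is half exact if it sends every
distinguished `n`-exangle `X₀ → ⋯ → X_{n+1}` to an exact sequence
`FX₀ → ⋯ → FX_{n+1}`. -/
def IsHalfExact {n : ℕ} (N : NExangulated C n) (F : C ⥤ A) : Prop :=
  ∀ ⦃Z : NExCplx C n⦄ ⦃δ : NEext N.E Z⦄, N.Distinguished Z δ → ∀ i : Fin n,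
    ∃ w : F.map (Z.d i.castSucc) ≫ F.map (Z.d i.succ) = 0,
      (ShortComplex.mk (F.map (Z.d i.castSucc)) (F.map (Z.d i.succ)) w).Exact

/-- The subset `E^F_R(X_{n+1}, X₀) ⊆ E(X_{n+1}, X₀)` of extensions all of whose
realizing distinguished `n`-exangles have `F`-epimorphic last differential. -/
def EFR {n : ℕ} (N : NExangulated C n) (F : C ⥤ A) (Xl X0 : C) :
    Set ((N.E.obj (op Xl)).obj X0) :=
  {δ | ∀ (Z : NExCplx C n) (h0 : Z.X (fin0 n) = X0) (hl : Z.X (finLast n) = Xl),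
      N.Distinguished Z (extCast N.E h0.symm hl.symm δ) →
        Epi (F.map (Z.d (Fin.last n)))}

end HalfExact

/-- `gm` is a deflation for the relative structure determined by the subfunctor `S`:
it is the last differential of a distinguished `n`-exangle whose extension lies
in `S`. -/
def IsRelDeflation (n : ℕ) (E : Cᵒᵖ ⥤ C ⥤ AddCommGrpCat.{v})
    (dist : ∀ Z : NExCplx C n, NEext E Z → Prop)
    (S : ∀ Xl X0 : C, Set ((E.obj (op Xl)).obj X0)) {X Y : C} (gm : X ⟶ Y) : Prop :=
  ∃ (Z : NExCplx C n) (δ : NEext E Z), dist Z δ ∧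
    δ ∈ S (Z.X (finLast n)) (Z.X (fin0 n)) ∧
    ∃ (h1 : Z.X (Fin.castSucc (Fin.last n)) = X) (h2 : Z.X (finLast n) = Y),
      Z.d (Fin.last n) = eqToHom h1 ≫ gm ≫ eqToHom h2.symm


end NEx

/-! Any two realizations of an extension are joined by a morphism of `n`-exangles whose end
components are identities, so whether `F` sends the last differential to an epimorphism does
not depend on the realization. Hence the `s|_{E^F_R}`-deflations are exactly the `s`-deflations
that `F` sends to epimorphisms, and both conditions are stable under composition. -/

namespace NEx

variable {C : Type u} [Category.{v} C]

lemma extCast_rfl (E : Cᵒᵖ ⥤ C ⥤ AddCommGrpCat.{v}) {A X : C}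
    (δ : (E.obj (op X)).obj A) : extCast E rfl rfl δ = δ := by
  simp [extCast, pushf, pullb]

lemma pushf_eqToHom_eq_pullb_eqToHom_extCast (E : Cᵒᵖ ⥤ C ⥤ AddCommGrpCat.{v})
    {A A' X X' : C} (hA : A = A') (hX : X = X') (δ : (E.obj (op X)).obj A) :
    pushf E (eqToHom hA) δ = pullb E (eqToHom hX) (extCast E hA hX δ) := by
  subst hA hX
  simp [extCast, pushf, pullb]

lemma epi_map_eqToHom_comp_comp_eqToHom_iff {D : Type*} [Category D] (F : C ⥤ D)
    {X X' Y Y' : C} (h1 : X' = X) (h2 : Y = Y') (f : X ⟶ Y) :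
    Epi (F.map (eqToHom h1 ≫ f ≫ eqToHom h2)) ↔ Epi (F.map f) := by
  subst h1 h2
  simp

lemma ExangleMor.epi_map_d_last {D : Type*} [Category D] {E : Cᵒᵖ ⥤ C ⥤ AddCommGrpCat.{v}}
    {n : ℕ} {Z W : NExCplx C n} {δ : NEext E Z} {ρ : NEext E W} (φ : ExangleMor E Z W δ ρ)
    (F : C ⥤ D) [Epi (F.map (Z.d (Fin.last n)))] [Epi (F.map (φ.app (finLast n)))] :
    Epi (F.map (W.d (Fin.last n))) := by
  have hsq := F.congr_map (φ.comm (Fin.last n))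
  simp only [F.map_comp] at hsq
  have : Epi (F.map (φ.app (Fin.last n).castSucc) ≫ F.map (W.d (Fin.last n))) := by
    rw [← hsq]
    exact epi_comp' ‹_› ‹Epi (F.map (φ.app (finLast n)))›
  exact epi_of_epi (F.map (φ.app (Fin.last n).castSucc)) _

variable [Preadditive C] [HasBinaryBiproducts C] [HasZeroObject C]

section RelativeDeflation

variable {A : Type u₂} [Category.{v₂} A] {n : ℕ} {N : NExangulated C n} {F : C ⥤ A}

lemma epi_map_d_last_of_mem_EFR {Z : NExCplx C n} {δ : NEext N.E Z}
    (hZ : N.Distinguished Z δ) (hδ : δ ∈ EFR N F (Z.X (finLast n)) (Z.X (fin0 n))) :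
    Epi (F.map (Z.d (Fin.last n))) :=
  hδ Z rfl rfl (by rwa [extCast_rfl])

lemma mem_EFR_of_epi_map_d_last {Z : NExCplx C n} {δ : NEext N.E Z}
    (hZ : N.Distinguished Z δ) [Epi (F.map (Z.d (Fin.last n)))] :
    δ ∈ EFR N F (Z.X (finLast n)) (Z.X (fin0 n)) := by
  intro W h0 hl hW
  obtain ⟨φ, -, hφ⟩ := N.lift_exists hZ hW (eqToHom h0.symm) (eqToHom hl.symm)
    (pushf_eqToHom_eq_pullb_eqToHom_extCast N.E h0.symm hl.symm δ)
  have : IsIso (F.map (φ.app (finLast n))) := by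
    rw [hφ, eqToHom_map]
    infer_instance
  exact φ.epi_map_d_last F

lemma isRelDeflation_EFR_iff {X Y : C} (f : X ⟶ Y) :
    IsRelDeflation n N.E N.Distinguished (EFR N F) f ↔
      IsDeflationFor n N.E N.Distinguished f ∧ Epi (F.map f) := by
  constructor
  · rintro ⟨Z, δ, hZ, hδ, h1, h2, hd⟩
    have hε := epi_map_d_last_of_mem_EFR hZ hδ
    rw [hd, epi_map_eqToHom_comp_comp_eqToHom_iff] at hε
    exact ⟨⟨Z, δ, hZ, h1, h2, hd⟩, hε⟩
  · rintro ⟨⟨Z, δ, hZ, h1, h2, hd⟩, hε⟩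
    have : Epi (F.map (Z.d (Fin.last n))) := by
      rwa [hd, epi_map_eqToHom_comp_comp_eqToHom_iff]
    exact ⟨Z, δ, hZ, mem_EFR_of_epi_map_d_last hZ, h1, h2, hd⟩

end RelativeDeflation

theorem relDeflation_comp_general {A' : Type u₂} [Category.{v₂} A']
    (n : ℕ) (N : NExangulated C n) (F : C ⥤ A')
    {Xn Xn1 Yn1 : C} (f : Xn ⟶ Xn1) (g : Xn1 ⟶ Yn1)
    (hf : IsRelDeflation n N.E N.Distinguished (EFR N F) f)
    (hg : IsRelDeflation n N.E N.Distinguished (EFR N F) g) :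
    IsRelDeflation n N.E N.Distinguished (EFR N F) (f ≫ g) ∧
    F.map (f ≫ g) = F.map f ≫ F.map g ∧
    Epi (F.map (f ≫ g)) := by
  rw [isRelDeflation_EFR_iff] at hf hg ⊢
  have hfg : Epi (F.map (f ≫ g)) := by
    rw [F.map_comp]
    exact epi_comp' hf.2 hg.2
  exact ⟨⟨N.defl_comp f g hf.1 hg.1, hfg⟩, F.map_comp f g, hfg⟩

/-- Composition of `s|_{E^F_R}`-deflations: if `fₙ` and `g_{n+1}` are deflations
of distinguished `n`-exangles whose extensions lie in `E^F_R`, then so is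
`g_{n+1} ∘ fₙ`; moreover `F(g_{n+1} ∘ fₙ) = F(g_{n+1}) ∘ F(fₙ)` is an
epimorphism. -/
theorem relDeflation_comp {A' : Type u₂} [Category.{v₂} A'] [Abelian A']
    (n : ℕ) (hn : 0 < n) (N : NExangulated C n) (F : C ⥤ A') [F.Additive]
    (hF : IsHalfExact N F) {Xn Xn1 Yn1 : C} (f : Xn ⟶ Xn1) (g : Xn1 ⟶ Yn1)
    (hf : IsRelDeflation n N.E N.Distinguished (EFR N F) f)
    (hg : IsRelDeflation n N.E N.Distinguished (EFR N F) g) :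
    IsRelDeflation n N.E N.Distinguished (EFR N F) (f ≫ g) ∧
    F.map (f ≫ g) = F.map f ≫ F.map g ∧
    Epi (F.map (f ≫ g)) :=
  relDeflation_comp_general n N F f g hf hg

end NEx
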